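/- In the shared-face setting, let p(v) = Σ_{i+j+k+l=d} γ_{ijkl} B^{d,T}_{ijkl}(v) and p̃(v) = Σ_{i+j+k+l=d} γ̃_{ijkl} B^{d,T̃}_{ijkl}(v). Then p(w) = p̃(w) for all w ∈ F if and only if γ_{0jkl} = γ̃_{0jlk} for all nonnegative integers j,k,l with j+k+l = d. -/

import Mathlib

lemma poly_coeffs_zero (n : ℕ) (a : ℕ → ℝ)
    (h : ∀ y : ℝ, 0 < y → ∑ j ∈ Finset.range (n+1), a j * y ^ j = 0) :
    ∀ j ≤ n, a j = 0 := by
  intro j hj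
  set P : Polynomial ℝ := ∑ j ∈ Finset.range (n+1), Polynomial.C (a j) * Polynomial.X ^ j with hP
  have hev : ∀ y : ℝ, P.eval y = ∑ j ∈ Finset.range (n+1), a j * y ^ j := by
    intro y; simp [hP, Polynomial.eval_finset_sum]
  have hP0 : P = 0 := by
    apply Polynomial.eq_zero_of_infinite_isRoot
    refine Set.Infinite.mono (fun y hy => ?_) (Set.Ioi_infinite (0:ℝ))
    simp only [Set.mem_setOf_eq, Polynomial.IsRoot, hev y]
    exact h y hy
  have hc : P.coeff j = a j := by
    simp only [hP, Polynomial.finset_sum_coeff, Polynomial.coeff_C_mul, Polynomial.coeff_X_pow,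
      mul_ite, mul_one, mul_zero]
    rw [Finset.sum_ite_eq (Finset.range (n+1)) j]
    simp [Nat.lt_succ_iff.mpr hj]
  rw [hP0] at hc
  simpa using hc.symm

lemma bernstein_coeffs_zero (n : ℕ) (a : ℕ → ℝ)
    (h : ∀ x : ℝ, 0 < x → x < 1 →
      ∑ j ∈ Finset.range (n+1), a j * x ^ j * (1-x) ^ (n-j) = 0) :
    ∀ j ≤ n, a j = 0 := by
  apply poly_coeffs_zero
  intro y hy
  have h1y : (0:ℝ) < 1 + y := by linarith
  have hx1 : 0 < y / (1+y) := div_pos hy h1y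
  have hx2 : y / (1+y) < 1 := (div_lt_one h1y).2 (by linarith)
  have key := h _ hx1 hx2
  have heq : ∑ j ∈ Finset.range (n+1), a j * (y/(1+y))^j * (1 - y/(1+y))^(n-j)
      = (∑ j ∈ Finset.range (n+1), a j * y^j) / (1+y)^n := by
    rw [Finset.sum_div]
    refine Finset.sum_congr rfl fun j hj => ?_
    have hjn : j ≤ n := Nat.lt_succ_iff.mp (Finset.mem_range.mp hj)
    have h2 : 1 - y/(1+y) = 1/(1+y) := by field_simp; ring
    have hpow : (1+y)^n = (1+y)^j * (1+y)^(n-j) := by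
      rw [← pow_add, Nat.add_sub_cancel' hjn]
    rw [h2, div_pow, div_pow, one_pow, hpow]
    field_simp
  rw [heq] at key
  rcases div_eq_zero_iff.mp key with h' | h'
  · exact h'
  · exact absurd h' (pow_ne_zero _ h1y.ne')

lemma swap23_vec (x0 x1 x2 x3 : ℕ) :
    (![x0,x1,x2,x3] ∘ (Equiv.swap (2:Fin 4) 3)) = ![x0,x1,x3,x2] := by
  funext i
  fin_cases i <;> simp [Equiv.swap_apply_def]

lemma comp_swap23_apply (m : Fin 4 → ℕ) :
    (m ∘ Equiv.swap (2:Fin 4) 3) = ![m 0, m 1, m 3, m 2] := by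
  funext i
  fin_cases i <;> simp [Equiv.swap_apply_def]

lemma mult_swap23 (m : Fin 4 → ℕ) :
    Nat.multinomial Finset.univ (m ∘ Equiv.swap (2:Fin 4) 3) = Nat.multinomial Finset.univ m := by
  unfold Nat.multinomial
  simp only [Function.comp]
  rw [Equiv.sum_comp (Equiv.swap (2:Fin 4) 3) m]
  congr 1
  exact Equiv.prod_comp (Equiv.swap (2:Fin 4) 3) (fun i => Nat.factorial (m i))

lemma mult_vec (m : Fin 4 → ℕ) :
    Nat.multinomial Finset.univ ![m 0, m 1, m 3, m 2] = Nat.multinomial Finset.univ m := by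
  rw [← comp_swap23_apply, mult_swap23]

lemma sum_swap23 (d : ℕ) (f : (Fin 4 → ℕ) → ℝ) :
    ∑ m ∈ Finset.Nat.antidiagonalTuple 4 d, f m
      = ∑ m ∈ Finset.Nat.antidiagonalTuple 4 d, f (m ∘ Equiv.swap (2:Fin 4) 3) := by
  refine Finset.sum_nbij' (fun m => m ∘ Equiv.swap (2:Fin 4) 3)
    (fun m => m ∘ Equiv.swap (2:Fin 4) 3) ?_ ?_ ?_ ?_ ?_
  · intro m hm
    rw [Finset.Nat.mem_antidiagonalTuple] at hm ⊢
    rw [← hm]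
    exact Equiv.sum_comp (Equiv.swap (2:Fin 4) 3) m
  · intro m hm
    rw [Finset.Nat.mem_antidiagonalTuple] at hm ⊢
    rw [← hm]
    exact Equiv.sum_comp (Equiv.swap (2:Fin 4) 3) m
  · intro m _; funext i; simp [Function.comp, Equiv.swap_apply_self]
  · intro m _; funext i; simp [Function.comp, Equiv.swap_apply_self]
  · intro m _
    congr 1
    funext i; simp [Function.comp, Equiv.swap_apply_self]

/-- Continuity condition across a shared face: with tetrahedra
`T = ⟨v₂,v₁,v₃,v₄⟩` and `T̃ = ⟨v₅,v₁,v₄,v₃⟩` sharing the face `F = ⟨v₁,v₃,v₄⟩`, and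
`p = ∑_{|m|=d} γ_m B^{d,T}_m`, `p̃ = ∑_{|m|=d} γ̃_m B^{d,T̃}_m`, one has `p = p̃` on `F`
iff `γ_{0jkl} = γ̃_{0jlk}` for all `j+k+l = d`. Here `bc`/`bct` are the barycentric
coordinate maps relative to `T`/`T̃` (with the stated vertex orders). -/
theorem stmt_9 (v1 v2 v3 v4 v5 : Fin 3 → ℝ)
    (hT : AffineIndependent ℝ ![v2, v1, v3, v4])
    (hT' : AffineIndependent ℝ ![v5, v1, v4, v3])
    (bc bct : (Fin 3 → ℝ) → (Fin 4 → ℝ))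
    (hbc1 : ∀ v, ∑ i, bc v i = 1) (hbc2 : ∀ v, v = ∑ i, bc v i • ![v2, v1, v3, v4] i)
    (hbct1 : ∀ v, ∑ i, bct v i = 1) (hbct2 : ∀ v, v = ∑ i, bct v i • ![v5, v1, v4, v3] i)
    (d : ℕ) (γ γ' : (Fin 4 → ℕ) → ℝ) :
    (∀ w ∈ convexHull ℝ ({v1, v3, v4} : Set (Fin 3 → ℝ)),
        ∑ m ∈ Finset.Nat.antidiagonalTuple 4 d,
            γ m * ((Nat.multinomial Finset.univ m : ℝ) * ∏ i, bc w i ^ m i) =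
          ∑ m ∈ Finset.Nat.antidiagonalTuple 4 d,
            γ' m * ((Nat.multinomial Finset.univ m : ℝ) * ∏ i, bct w i ^ m i)) ↔
      ∀ j k l : ℕ, j + k + l = d → γ ![0, j, k, l] = γ' ![0, j, l, k] := by
  have huniq : ∀ (p : Fin 4 → Fin 3 → ℝ), AffineIndependent ℝ p →
      ∀ u u' : Fin 4 → ℝ, ∑ i, u i = 1 → ∑ i, u' i = 1 →
      ∑ i, u i • p i = ∑ i, u' i • p i → u = u' := by
    intro p hp u u' hu hu' heq
    have h := affineIndependent_iff.mp hp Finset.univ (u - u')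
      (by simp [Pi.sub_apply, Finset.sum_sub_distrib, hu, hu'])
      (by simp [Pi.sub_apply, sub_smul, Finset.sum_sub_distrib, heq])
    funext i
    have := h i (Finset.mem_univ i)
    simpa [sub_eq_zero] using this
  have hbcw : ∀ a b c : ℝ, a + b + c = 1 →
      bc (a • v1 + b • v3 + c • v4) = ![0, a, b, c] := by
    intro a b c habc
    apply huniq _ hT _ _ (hbc1 _) (by simp [Fin.sum_univ_four]; linarith)
    rw [← hbc2 _]
    simp [Fin.sum_univ_four]
  have hbctw : ∀ a b c : ℝ, a + b + c = 1 →
      bct (a • v1 + b • v3 + c • v4) = ![0, a, c, b] := by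
    intro a b c habc
    apply huniq _ hT' _ _ (hbct1 _) (by simp [Fin.sum_univ_four]; linarith)
    rw [← hbct2 _]
    simp [Fin.sum_univ_four]
    module
  have hmem : ∀ a b c : ℝ, 0 ≤ a → 0 ≤ b → 0 ≤ c → a + b + c = 1 →
      a • v1 + b • v3 + c • v4 ∈ convexHull ℝ ({v1, v3, v4} : Set (Fin 3 → ℝ)) := by
    intro a b c ha hb hc habc
    have hconv := convex_convexHull ℝ ({v1, v3, v4} : Set (Fin 3 → ℝ))
    have h1 : v1 ∈ convexHull ℝ ({v1, v3, v4} : Set (Fin 3 → ℝ)) :=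
      subset_convexHull _ _ (by simp)
    have h3 : v3 ∈ convexHull ℝ ({v1, v3, v4} : Set (Fin 3 → ℝ)) :=
      subset_convexHull _ _ (by simp)
    have h4 : v4 ∈ convexHull ℝ ({v1, v3, v4} : Set (Fin 3 → ℝ)) :=
      subset_convexHull _ _ (by simp)
    rcases eq_or_lt_of_le (add_nonneg hb hc) with h0 | h0
    · have hb0 : b = 0 := by linarith
      have hc0 : c = 0 := by linarith
      have ha1 : a = 1 := by linarith
      subst hb0 hc0 ha1
      simpa using h1
    · have hu := hconv h3 h4 (div_nonneg hb h0.le) (div_nonneg hc h0.le)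
        (by field_simp)
      have hw := hconv h1 hu ha (add_nonneg hb hc) (by linarith)
      convert hw using 1
      rw [smul_add, smul_smul, smul_smul, mul_div_cancel₀ _ h0.ne', mul_div_cancel₀ _ h0.ne']
      abel
  have hsubset : convexHull ℝ ({v1, v3, v4} : Set (Fin 3 → ℝ)) ⊆
      {w | ∃ a b c : ℝ, a + b + c = 1 ∧ w = a • v1 + b • v3 + c • v4} := by
    apply convexHull_min
    · rintro x hx
      rcases hx with rfl | rfl | rfl
      · exact ⟨1, 0, 0, by norm_num, by module⟩
      · exact ⟨0, 1, 0, by norm_num, by module⟩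
      · exact ⟨0, 0, 1, by norm_num, by module⟩
    · intro x hx y hy p q hp hq hpq
      obtain ⟨ax, bx, cx, hsx, hxw⟩ := hx
      obtain ⟨ay, by', cy, hsy, hyw⟩ := hy
      refine ⟨p*ax + q*ay, p*bx + q*by', p*cx + q*cy,
        by linear_combination p*hsx + q*hsy + hpq, ?_⟩
      rw [hxw, hyw]
      module
  constructor
  · -- forward direction
    intro H j k l hjkl
    -- key1 : the difference as a function of (s,t) vanishes
    have key1 : ∀ s t : ℝ, 0 < s → s < 1 → 0 < t → t < 1 →
        ∑ m ∈ Finset.Nat.antidiagonalTuple 4 d,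
          (γ m - γ' (m ∘ Equiv.swap (2:Fin 4) 3)) * (Nat.multinomial Finset.univ m : ℝ) *
            ((0:ℝ)^(m 0) * (1-s)^(m 1) * (s*t)^(m 2) * (s*(1-t))^(m 3)) = 0 := by
      intro s t hs hs1 ht ht1
      have habc : (1-s) + s*t + s*(1-t) = 1 := by ring
      have hE := H _ (hmem (1-s) (s*t) (s*(1-t)) (by linarith)
        (by positivity) (by nlinarith) habc)
      rw [hbcw _ _ _ habc, hbctw _ _ _ habc] at hE
      rw [sum_swap23 d (fun m => γ' m *
        ((Nat.multinomial Finset.univ m : ℝ) * ∏ i, (![0, 1-s, s*(1-t), s*t]) i ^ m i))] at hE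
      rw [← sub_eq_zero, ← Finset.sum_sub_distrib] at hE
      refine Eq.trans (Finset.sum_congr rfl fun m _ => ?_) hE
      simp only [mult_swap23, comp_swap23_apply, mult_vec, Fin.prod_univ_four,
        Matrix.cons_val_zero, Matrix.cons_val_one, Matrix.head_cons,
        Matrix.cons_val_two, Matrix.tail_cons, Matrix.cons_val_three]
      ring
    -- key2 : for each fixed t, coefficients in s vanish
    have key2 : ∀ t : ℝ, 0 < t → t < 1 → ∀ j' ≤ d,
        ∑ m ∈ (Finset.Nat.antidiagonalTuple 4 d).filter (fun m => m 1 = j'),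
          (γ m - γ' (m ∘ Equiv.swap (2:Fin 4) 3)) * (Nat.multinomial Finset.univ m : ℝ) *
            ((0:ℝ)^(m 0) * t^(m 2) * (1-t)^(m 3)) = 0 := by
      intro t ht ht1
      apply bernstein_coeffs_zero d
      intro x hx hx1
      calc ∑ j' ∈ Finset.range (d+1),
            (∑ m ∈ (Finset.Nat.antidiagonalTuple 4 d).filter (fun m => m 1 = j'),
              (γ m - γ' (m ∘ Equiv.swap (2:Fin 4) 3)) * (Nat.multinomial Finset.univ m : ℝ) *
                ((0:ℝ)^(m 0) * t^(m 2) * (1-t)^(m 3))) * x^j' * (1-x)^(d-j')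
          = ∑ j' ∈ Finset.range (d+1),
            ∑ m ∈ (Finset.Nat.antidiagonalTuple 4 d).filter (fun m => m 1 = j'),
              ((γ m - γ' (m ∘ Equiv.swap (2:Fin 4) 3)) * (Nat.multinomial Finset.univ m : ℝ) *
                ((0:ℝ)^(m 0) * t^(m 2) * (1-t)^(m 3))) * x^(m 1) * (1-x)^(d - m 1) := by
            refine Finset.sum_congr rfl fun j' _ => ?_
            rw [Finset.sum_mul, Finset.sum_mul]
            refine Finset.sum_congr rfl fun m hm => ?_
            rw [(Finset.mem_filter.mp hm).2]
        _ = ∑ m ∈ Finset.Nat.antidiagonalTuple 4 d,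
              ((γ m - γ' (m ∘ Equiv.swap (2:Fin 4) 3)) * (Nat.multinomial Finset.univ m : ℝ) *
                ((0:ℝ)^(m 0) * t^(m 2) * (1-t)^(m 3))) * x^(m 1) * (1-x)^(d - m 1) := by
            apply Finset.sum_fiberwise_of_maps_to
            intro m hm
            rw [Finset.Nat.mem_antidiagonalTuple, Fin.sum_univ_four] at hm
            exact Finset.mem_range.mpr (by omega)
        _ = ∑ m ∈ Finset.Nat.antidiagonalTuple 4 d,
              (γ m - γ' (m ∘ Equiv.swap (2:Fin 4) 3)) * (Nat.multinomial Finset.univ m : ℝ) *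
                ((0:ℝ)^(m 0) * (1-(1-x))^(m 1) * ((1-x)*t)^(m 2) * ((1-x)*(1-t))^(m 3)) := by
            refine Finset.sum_congr rfl fun m hm => ?_
            rw [Finset.Nat.mem_antidiagonalTuple, Fin.sum_univ_four] at hm
            rcases Nat.eq_zero_or_pos (m 0) with h0 | h0
            · have h23 : d - m 1 = m 2 + m 3 := by omega
              rw [h0, h23, show (1:ℝ)-(1-x) = x by ring, mul_pow, mul_pow, pow_add]
              ring
            · rw [zero_pow h0.ne']
              ring
        _ = 0 := key1 (1-x) t (by linarith) (by linarith) ht ht1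
    -- key3 : coefficients in t vanish
    have key3 : ∀ j' ≤ d, ∀ k' ≤ d - j',
        ∑ m ∈ ((Finset.Nat.antidiagonalTuple 4 d).filter (fun m => m 1 = j')).filter
            (fun m => m 2 = k'),
          (γ m - γ' (m ∘ Equiv.swap (2:Fin 4) 3)) * (Nat.multinomial Finset.univ m : ℝ) *
            (0:ℝ)^(m 0) = 0 := by
      intro j' hj'
      apply bernstein_coeffs_zero (d - j')
      intro t ht ht1
      calc ∑ k' ∈ Finset.range (d-j'+1),
            (∑ m ∈ ((Finset.Nat.antidiagonalTuple 4 d).filter (fun m => m 1 = j')).filter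
                (fun m => m 2 = k'),
              (γ m - γ' (m ∘ Equiv.swap (2:Fin 4) 3)) * (Nat.multinomial Finset.univ m : ℝ) *
                (0:ℝ)^(m 0)) * t^k' * (1-t)^(d-j'-k')
          = ∑ k' ∈ Finset.range (d-j'+1),
            ∑ m ∈ ((Finset.Nat.antidiagonalTuple 4 d).filter (fun m => m 1 = j')).filter
                (fun m => m 2 = k'),
              ((γ m - γ' (m ∘ Equiv.swap (2:Fin 4) 3)) * (Nat.multinomial Finset.univ m : ℝ) *
                (0:ℝ)^(m 0)) * t^(m 2) * (1-t)^(d-j' - m 2) := by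
            refine Finset.sum_congr rfl fun k' _ => ?_
            rw [Finset.sum_mul, Finset.sum_mul]
            refine Finset.sum_congr rfl fun m hm => ?_
            rw [(Finset.mem_filter.mp hm).2]
        _ = ∑ m ∈ (Finset.Nat.antidiagonalTuple 4 d).filter (fun m => m 1 = j'),
              ((γ m - γ' (m ∘ Equiv.swap (2:Fin 4) 3)) * (Nat.multinomial Finset.univ m : ℝ) *
                (0:ℝ)^(m 0)) * t^(m 2) * (1-t)^(d-j' - m 2) := by
            apply Finset.sum_fiberwise_of_maps_to
            intro m hm
            obtain ⟨hm1, hm2⟩ := Finset.mem_filter.mp hm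
            rw [Finset.Nat.mem_antidiagonalTuple, Fin.sum_univ_four] at hm1
            exact Finset.mem_range.mpr (by omega)
        _ = ∑ m ∈ (Finset.Nat.antidiagonalTuple 4 d).filter (fun m => m 1 = j'),
              (γ m - γ' (m ∘ Equiv.swap (2:Fin 4) 3)) * (Nat.multinomial Finset.univ m : ℝ) *
                ((0:ℝ)^(m 0) * t^(m 2) * (1-t)^(m 3)) := by
            refine Finset.sum_congr rfl fun m hm => ?_
            obtain ⟨hm1, hm2⟩ := Finset.mem_filter.mp hm
            rw [Finset.Nat.mem_antidiagonalTuple, Fin.sum_univ_four] at hm1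
            rcases Nat.eq_zero_or_pos (m 0) with h0 | h0
            · have h3 : d - j' - m 2 = m 3 := by omega
              rw [h3]
              ring
            · rw [zero_pow h0.ne']
              ring
        _ = 0 := key2 t ht ht1 j' hj'
    -- extraction
    have hj : j ≤ d := by omega
    have hk : k ≤ d - j := by omega
    have h := key3 j hj k hk
    have hsingle : ∑ m ∈ ((Finset.Nat.antidiagonalTuple 4 d).filter (fun m => m 1 = j)).filter
            (fun m => m 2 = k),
          (γ m - γ' (m ∘ Equiv.swap (2:Fin 4) 3)) * (Nat.multinomial Finset.univ m : ℝ) *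
            (0:ℝ)^(m 0)
        = (γ ![0,j,k,l] - γ' (![0,j,k,l] ∘ Equiv.swap (2:Fin 4) 3)) *
            (Nat.multinomial Finset.univ ![0,j,k,l] : ℝ) := by
      rw [Finset.sum_eq_single (![0,j,k,l] : Fin 4 → ℕ)]
      · norm_num
      · intro m hm hne
        obtain ⟨hm', hm2⟩ := Finset.mem_filter.mp hm
        obtain ⟨hm1', hm1⟩ := Finset.mem_filter.mp hm'
        rw [Finset.Nat.mem_antidiagonalTuple, Fin.sum_univ_four] at hm1'
        rcases Nat.eq_zero_or_pos (m 0) with h0 | h0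
        · exfalso
          apply hne
          funext i
          fin_cases i
          · simpa using h0
          · simpa using hm1
          · simpa using hm2
          · show m 3 = l
            omega
        · rw [zero_pow h0.ne', mul_zero]
      · intro habs
        exfalso
        apply habs
        rw [Finset.mem_filter, Finset.mem_filter, Finset.Nat.mem_antidiagonalTuple,
          Fin.sum_univ_four]
        refine ⟨⟨?_, ?_⟩, ?_⟩ <;> simp [hjkl]
    rw [hsingle] at h
    have hmpos : (0:ℝ) < (Nat.multinomial Finset.univ ![0,j,k,l] : ℝ) := by
      exact_mod_cast Nat.multinomial_pos _ _
    have := mul_eq_zero.mp h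
    rcases this with h' | h'
    · rw [swap23_vec] at h'
      linarith [sub_eq_zero.mp h']
    · exact absurd h' hmpos.ne'
  · -- backward direction
    intro hco w hw
    obtain ⟨a, b, c, habc, hww⟩ := hsubset hw
    rw [hww, hbcw a b c habc, hbctw a b c habc]
    rw [sum_swap23 d (fun m => γ' m *
      ((Nat.multinomial Finset.univ m : ℝ) * ∏ i, (![0, a, c, b]) i ^ m i))]
    refine Finset.sum_congr rfl fun m hm => ?_
    rw [Finset.Nat.mem_antidiagonalTuple, Fin.sum_univ_four] at hm
    simp only [mult_swap23, comp_swap23_apply, mult_vec, Fin.prod_univ_four,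
      Matrix.cons_val_zero, Matrix.cons_val_one, Matrix.head_cons,
      Matrix.cons_val_two, Matrix.tail_cons, Matrix.cons_val_three]
    rcases Nat.eq_zero_or_pos (m 0) with h0 | h0
    · have hmv : m = ![0, m 1, m 2, m 3] := by
        funext i
        fin_cases i
        · simpa using h0
        · rfl
        · rfl
        · rfl
      have hγ : γ m = γ' ![0, m 1, m 3, m 2] := by
        rw [show γ m = γ ![0, m 1, m 2, m 3] by rw [← hmv]]
        exact hco (m 1) (m 2) (m 3) (by omega)
      rw [h0, hγ]
      ring
    · rw [zero_pow h0.ne']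
      ring
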